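/- arXiv:2001.05304 — 3 statements merged into one kernel-verified Lean document; each statement's English description precedes it below -/
import Mathlib

section
/- Let m, a, d be positive integers with d ≥ 2 and a < m^(1/d) (i.e., a^d < m). Then any nonzero integer vector (x_0, ..., x_{d-1}) satisfying x_0 + a·x_1 + a²·x_2 + ... + a^{d-1}·x_{d-1} ≡ 0 (mod m) has Euclidean norm at least √(a²+1). -/
/-- Auxiliary bound: if nonnegative integers `c i` satisfy `∑ c i ^ 2 ≤ b ^ 2` with
`b ≤ a`, `1 ≤ a`, then `∑ c i * a ^ (i+1) ≤ b * a ^ d`. -/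
lemma lcg_bound_aux (a b : ℕ) (ha : 1 ≤ a) (hba : b ≤ a) :
    ∀ d : ℕ, ∀ c : Fin d → ℤ, (∀ i, 0 ≤ c i) → (∑ i, (c i) ^ 2) ≤ (b : ℤ) ^ 2 →
    (∑ i : Fin d, c i * (a : ℤ) ^ ((i : ℕ) + 1)) ≤ (b : ℤ) * (a : ℤ) ^ d := by
  intro d
  induction d with
  | zero =>
    intro c hc hsum
    simp only [Finset.univ_eq_empty, Finset.sum_empty, pow_zero, mul_one]
    positivity
  | succ d ih =>
    intro c hc hsum
    rw [Fin.sum_univ_castSucc] at hsum ⊢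
    simp only [Fin.coe_castSucc, Fin.val_last] at hsum ⊢
    set cd := c (Fin.last d) with hcd
    have hcd0 : 0 ≤ cd := hc _
    have hrest_nonneg : (0:ℤ) ≤ ∑ i : Fin d, (c i.castSucc) ^ 2 :=
      Finset.sum_nonneg fun i _ => sq_nonneg _
    have hcd_le : cd ≤ (b : ℤ) := by nlinarith
    have hapow : (0:ℤ) < (a:ℤ) ^ d := by positivity
    rcases eq_or_lt_of_le hcd_le with heq | hlt
    · -- top coordinate equals b, so the rest is zero
      have hzero : ∀ i : Fin d, c i.castSucc = 0 := by
        intro i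
        have h1 : (∑ j : Fin d, (c j.castSucc) ^ 2) ≤ 0 := by nlinarith
        have h2 : (c i.castSucc) ^ 2 ≤ 0 := by
          have h3 := Finset.single_le_sum (f := fun j : Fin d => (c j.castSucc) ^ 2)
            (fun j _ => sq_nonneg _) (Finset.mem_univ i)
          linarith
        nlinarith [sq_nonneg (c i.castSucc), hc i.castSucc]
      have hsz : (∑ i : Fin d, c i.castSucc * (a : ℤ) ^ ((i : ℕ) + 1)) = 0 := by
        apply Finset.sum_eq_zero; intro i _; rw [hzero i]; ring
      rw [hsz, heq, zero_add, pow_succ]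
    · -- top coordinate < b
      have hrest : (∑ i : Fin d, (c i.castSucc) ^ 2) ≤ (b : ℤ) ^ 2 := by nlinarith
      have hih := ih (fun i => c i.castSucc) (fun i => hc _) hrest
      have hkey : (b : ℤ) * (a : ℤ) ^ d + cd * (a : ℤ) ^ (d + 1) ≤ (b : ℤ) * (a : ℤ) ^ (d + 1) := by
        have hba' : (b : ℤ) ≤ (a : ℤ) := by exact_mod_cast hba
        have h1 : (1:ℤ) ≤ (b : ℤ) - cd := by linarith
        have : (b : ℤ) ≤ ((b : ℤ) - cd) * (a : ℤ) := by nlinarith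
        calc (b : ℤ) * (a : ℤ) ^ d + cd * (a : ℤ) ^ (d + 1)
            ≤ ((b : ℤ) - cd) * (a : ℤ) * (a : ℤ) ^ d + cd * (a : ℤ) ^ (d + 1) := by nlinarith
          _ = (b : ℤ) * (a : ℤ) ^ (d + 1) := by ring
      linarith

/-- If a nonzero integer vector satisfies `∑ x i * a ^ i = 0` exactly, then
`∑ x i ^ 2 ≥ a ^ 2 + 1`. -/
lemma lcg_zero_case (a : ℕ) (ha : 0 < a) :
    ∀ d : ℕ, ∀ x : Fin d → ℤ, x ≠ 0 → (∑ i : Fin d, x i * (a : ℤ) ^ (i : ℕ)) = 0 →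
    (a : ℤ) ^ 2 + 1 ≤ ∑ i : Fin d, (x i) ^ 2 := by
  intro d
  induction d with
  | zero =>
    intro x hx _
    exact absurd (funext fun i => i.elim0) hx
  | succ d ih =>
    intro x hx hS
    rw [Fin.sum_univ_succ] at hS
    simp only [Fin.val_zero, pow_zero, mul_one, Fin.val_succ] at hS
    have htail : (∑ i : Fin d, x i.succ * (a : ℤ) ^ ((i : ℕ) + 1))
        = (a : ℤ) * ∑ i : Fin d, x i.succ * (a : ℤ) ^ (i : ℕ) := by
      rw [Finset.mul_sum]
      apply Finset.sum_congr rfl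
      intro i _
      ring
    rw [htail] at hS
    have ha0 : ((a : ℤ)) ≠ 0 := by exact_mod_cast ha.ne'
    by_cases h0 : x 0 = 0
    · -- head is zero: use induction hypothesis on the tail
      have htS : (∑ i : Fin d, x i.succ * (a : ℤ) ^ (i : ℕ)) = 0 := by
        rcases mul_eq_zero.1 (by linarith [hS] : (a:ℤ) * ∑ i : Fin d, x i.succ * (a : ℤ) ^ (i:ℕ) = 0) with h | h
        · exact absurd h ha0
        · exact h
      have hy : (fun i : Fin d => x i.succ) ≠ 0 := by
        intro hcontra
        apply hx
        funext i
        refine Fin.cases h0 (fun j => ?_) i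
        exact congrFun hcontra j
      have := ih (fun i => x i.succ) hy htS
      rw [Fin.sum_univ_succ]
      have : (0:ℤ) ≤ (x 0)^2 := sq_nonneg _
      calc (a:ℤ)^2 + 1 ≤ ∑ i : Fin d, (x i.succ)^2 := ih (fun i => x i.succ) hy htS
        _ ≤ (x 0)^2 + ∑ i : Fin d, (x i.succ)^2 := by nlinarith [sq_nonneg (x 0)]
    · -- head nonzero: a ∣ x 0, so (x 0)^2 ≥ a^2, and the tail is nonzero
      have hdvd : (a : ℤ) ∣ x 0 := by
        refine ⟨-(∑ i : Fin d, x i.succ * (a : ℤ) ^ (i : ℕ)), ?_⟩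
        linarith [hS]
      have habs : (a : ℤ) ≤ |x 0| := Int.le_of_dvd (abs_pos.2 h0) ((dvd_abs _ _).2 hdvd)
      have hsq : (a : ℤ)^2 ≤ (x 0)^2 := by
        have h1 : (0:ℤ) ≤ (a:ℤ) := by positivity
        nlinarith [sq_abs (x 0)]
      have hex : ∃ i : Fin d, x i.succ ≠ 0 := by
        by_contra hall
        push_neg at hall
        have : (∑ i : Fin d, x i.succ * (a : ℤ) ^ (i : ℕ)) = 0 :=
          Finset.sum_eq_zero fun i _ => by rw [hall i]; ring
        rw [this, mul_zero, add_zero] at hS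
        exact h0 hS
      obtain ⟨j, hj⟩ := hex
      have hj1 : (1:ℤ) ≤ (x j.succ)^2 := by
        have : 0 < (x j.succ)^2 := by positivity
        omega
      have hsum_tail : (x j.succ)^2 ≤ ∑ i : Fin d, (x i.succ)^2 :=
        Finset.single_le_sum (f := fun i : Fin d => (x i.succ)^2)
          (fun i _ => sq_nonneg _) (Finset.mem_univ j)
      rw [Fin.sum_univ_succ]
      linarith

/-- Any nonzero integer vector in the dual lattice of an LCG with `a^d < m`
has Euclidean norm at least `√(a²+1)`. -/
theorem dual_lattice_norm_lower_bound
    (m a d : ℕ) (hm : 0 < m) (ha : 0 < a) (hd : 2 ≤ d) (had : a ^ d < m)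
    (x : Fin d → ℤ) (hx : x ≠ 0)
    (hcong : (m : ℤ) ∣ ∑ i : Fin d, x i * (a : ℤ) ^ (i : ℕ)) :
    Real.sqrt ((a : ℝ) ^ 2 + 1) ≤ Real.sqrt (∑ i : Fin d, (x i : ℝ) ^ 2) := by
  -- reduce to the integer inequality
  have key : (a : ℤ) ^ 2 + 1 ≤ ∑ i : Fin d, (x i) ^ 2 := by
    set S : ℤ := ∑ i : Fin d, x i * (a : ℤ) ^ (i : ℕ) with hSdef
    by_cases hS : S = 0
    · exact lcg_zero_case a ha d x hx hS
    · -- S ≠ 0 : |S| ≥ m > a^d, but small norm would force |S| ≤ a^d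
      by_contra hcon
      push_neg at hcon
      have hn : (∑ i : Fin d, (x i) ^ 2) ≤ (a : ℤ) ^ 2 := by linarith
      have hmS : (m : ℤ) ≤ |S| := Int.le_of_dvd (abs_pos.2 hS) ((dvd_abs _ _).2 hcong)
      -- |S| ≤ ∑ |x i| * a^i
      have habs : |S| ≤ ∑ i : Fin d, |x i| * (a : ℤ) ^ (i : ℕ) := by
        calc |S| ≤ ∑ i : Fin d, |x i * (a : ℤ) ^ (i : ℕ)| :=
              Finset.abs_sum_le_sum_abs _ _
          _ = ∑ i : Fin d, |x i| * (a : ℤ) ^ (i : ℕ) := by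
              apply Finset.sum_congr rfl
              intro i _
              rw [abs_mul, abs_pow, abs_of_nonneg (by positivity : (0:ℤ) ≤ (a:ℤ))]
      have hbound := lcg_bound_aux a a ha le_rfl d (fun i => |x i|)
        (fun i => abs_nonneg _) (by simpa [sq_abs] using hn)
      -- multiply habs by a and compare
      have hmul : (a : ℤ) * |S| ≤ (a : ℤ) * (a : ℤ) ^ d := by
        calc (a : ℤ) * |S| ≤ (a : ℤ) * ∑ i : Fin d, |x i| * (a : ℤ) ^ (i : ℕ) := by
              apply mul_le_mul_of_nonneg_left habs (by positivity)
          _ = ∑ i : Fin d, |x i| * (a : ℤ) ^ ((i : ℕ) + 1) := by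
              rw [Finset.mul_sum]
              apply Finset.sum_congr rfl
              intro i _
              ring
          _ ≤ (a : ℤ) * (a : ℤ) ^ d := hbound
      have hS_le : |S| ≤ (a : ℤ) ^ d := by
        have ha0 : (0:ℤ) < (a : ℤ) := by exact_mod_cast ha
        exact le_of_mul_le_mul_left hmul ha0
      have hadZ : ((a : ℤ)) ^ d < (m : ℤ) := by exact_mod_cast had
      linarith
  have hcast : (∑ i : Fin d, (x i : ℝ) ^ 2) = ((∑ i : Fin d, (x i) ^ 2 : ℤ) : ℝ) := by
    push_cast
    rfl
  apply Real.sqrt_le_sqrt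
  rw [hcast]
  exact_mod_cast key
end

section
/- Let m, a, d be positive integers with d ≥ 2 and a^d < m. The shortest nonzero vector of the lattice Λ*_d = { (x_0,...,x_{d-1}) ∈ ℤ^d : Σ_{i=0}^{d-1} x_i a^i ≡ 0 (mod m) } has length exactly √(a²+1); in particular the vector (-a, 1, 0, ..., 0) attains this minimum. -/
open Finset

private lemma lemA (a : ℕ) (ha : 0 < a) :
    ∀ (d : ℕ) (b : ℕ → ℤ), (∀ i, 0 ≤ b i) →
      (∑ i ∈ range d, (b i)^2) ≤ (a:ℤ)^2 →
      (∑ i ∈ range d, b i * (a:ℤ)^i) ≤ (a:ℤ)^d := by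
  intro d
  induction d with
  | zero => intro b _ _; simp
  | succ d ih =>
    intro b hb hsum
    rw [Finset.sum_range_succ] at hsum ⊢
    have hnn : (0:ℤ) ≤ ∑ i ∈ range d, (b i)^2 :=
      Finset.sum_nonneg fun i _ => sq_nonneg _
    have ha' : (1:ℤ) ≤ (a:ℤ) := by exact_mod_cast ha
    have hbd : (b d)^2 ≤ (a:ℤ)^2 := by linarith
    have hbda : b d ≤ (a:ℤ) := by nlinarith [hb d]
    have hpow : (0:ℤ) < (a:ℤ)^d := by positivity
    by_cases h : b d ≤ (a:ℤ) - 1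
    · have h1 : ∑ i ∈ range d, (b i)^2 ≤ (a:ℤ)^2 := by nlinarith [sq_nonneg (b d)]
      have h2 := ih b hb h1
      have h3 : b d * (a:ℤ)^d ≤ ((a:ℤ) - 1) * (a:ℤ)^d :=
        mul_le_mul_of_nonneg_right h hpow.le
      have : (a:ℤ)^(d+1) = (a:ℤ)^d * a := pow_succ _ _
      nlinarith
    · have hbd' : b d = (a:ℤ) := le_antisymm hbda (by linarith)
      have hz : ∀ i ∈ range d, b i = 0 := by
        have hzero : ∑ i ∈ range d, (b i)^2 = 0 := by
          rw [hbd'] at hsum; linarith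
        intro i hi
        have := (Finset.sum_eq_zero_iff_of_nonneg (fun i _ => sq_nonneg (b i))).mp hzero i hi
        exact pow_eq_zero_iff (n := 2) (by norm_num) |>.mp this
      have hs0 : ∑ i ∈ range d, b i * (a:ℤ)^i = 0 :=
        Finset.sum_eq_zero fun i hi => by rw [hz i hi]; ring
      rw [hs0, hbd', pow_succ]
      linarith

private lemma lemB (a : ℕ) :
    ∀ (d : ℕ) (x : ℕ → ℤ), (∑ i ∈ range d, x i * (a:ℤ)^i) = 0 →
      (∃ i, i < d ∧ x i ≠ 0) →
      (a:ℤ)^2 + 1 ≤ ∑ i ∈ range d, (x i)^2 := by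
  intro d
  induction d with
  | zero => rintro x _ ⟨i, hi, _⟩; omega
  | succ d ih =>
    intro x hsum hex
    rw [Finset.sum_range_succ'] at hsum
    have key : ∑ i ∈ range d, x (i+1) * (a:ℤ)^(i+1)
        = (∑ i ∈ range d, x (i+1) * (a:ℤ)^i) * (a:ℤ) := by
      rw [Finset.sum_mul]
      exact Finset.sum_congr rfl fun i _ => by ring
    rw [key, pow_zero, mul_one] at hsum
    set T := ∑ i ∈ range d, x (i+1) * (a:ℤ)^i with hT
    have hx0 : x 0 = -(T * a) := by linarith
    have hgoal : (∑ i ∈ range (d+1), (x i)^2)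
        = (∑ i ∈ range d, (x (i+1))^2) + (x 0)^2 := Finset.sum_range_succ' _ _
    by_cases hT0 : T = 0
    · have hx00 : x 0 = 0 := by rw [hx0, hT0]; ring
      obtain ⟨i, hi, hxi⟩ := hex
      have hi' : ∃ j, j < d ∧ x (j+1) ≠ 0 := by
        rcases i with _ | j
        · exact absurd hx00 hxi
        · exact ⟨j, by omega, hxi⟩
      have := ih (fun i => x (i+1)) (by simpa using hT0.symm ▸ hT.symm) hi'
      rw [hgoal]
      nlinarith [sq_nonneg (x 0), this]
    · have hT1 : (1:ℤ) ≤ T^2 := by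
        have := Int.one_le_abs (by simpa using hT0)
        nlinarith [sq_abs T]
      have hx0sq : (x 0)^2 = T^2 * (a:ℤ)^2 := by rw [hx0]; ring
      have hx0ge : (a:ℤ)^2 ≤ (x 0)^2 := by nlinarith [sq_nonneg (a:ℤ)]
      have hj : ∃ j ∈ range d, x (j+1) ≠ 0 := by
        by_contra hc
        push_neg at hc
        exact hT0 (Finset.sum_eq_zero fun i hi => by rw [hc i hi]; ring)
      obtain ⟨j, hjmem, hjne⟩ := hj
      have hterm : (1:ℤ) ≤ (x (j+1))^2 := by
        have := Int.one_le_abs hjne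
        nlinarith [sq_abs (x (j+1))]
      have hrest : (1:ℤ) ≤ ∑ i ∈ range d, (x (i+1))^2 :=
        le_trans hterm (Finset.single_le_sum (fun i _ => sq_nonneg (x (i+1))) hjmem)
      rw [hgoal]
      linarith

private lemma sum_special (a d : ℕ) (hd : 2 ≤ d) (f : ℕ → ℤ)
    (h0 : ∀ n, n ≠ 0 → n ≠ 1 → f n = 0) :
    ∑ n ∈ range d, f n = f 0 + f 1 := by
  have hsub : ({0, 1} : Finset ℕ) ⊆ range d := by
    intro n hn
    simp only [Finset.mem_insert, Finset.mem_singleton] at hn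
    simp only [Finset.mem_range]
    omega
  rw [← Finset.sum_subset hsub (fun n _ hn => by
    simp only [Finset.mem_insert, Finset.mem_singleton, not_or] at hn
    exact h0 n hn.1 hn.2)]
  rw [Finset.sum_pair (by norm_num : (0:ℕ) ≠ 1)]

/-- For `a^d < m`, the shortest nonzero vector of the dual lattice
`Λ*_d = {x ∈ ℤ^d : Σ x_i a^i ≡ 0 (mod m)}` has length exactly `√(a²+1)`,
attained by the vector `(-a, 1, 0, …, 0)`. -/
theorem dual_lattice_shortest_vector
    (m a d : ℕ) (hm : 0 < m) (ha : 0 < a) (hd : 2 ≤ d) (had : a ^ d < m) :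
    IsLeast
      {r : ℝ | ∃ x : Fin d → ℤ, x ≠ 0 ∧
        (m : ℤ) ∣ ∑ i : Fin d, x i * (a : ℤ) ^ (i : ℕ) ∧
        r = Real.sqrt (∑ i : Fin d, (x i : ℝ) ^ 2)}
      (Real.sqrt ((a : ℝ) ^ 2 + 1)) ∧
    (∀ v : Fin d → ℤ,
      (v = fun i : Fin d => if (i : ℕ) = 0 then -(a : ℤ) else if (i : ℕ) = 1 then 1 else 0) →
      v ≠ 0 ∧ (m : ℤ) ∣ ∑ i : Fin d, v i * (a : ℤ) ^ (i : ℕ) ∧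
        Real.sqrt (∑ i : Fin d, (v i : ℝ) ^ 2) = Real.sqrt ((a : ℝ) ^ 2 + 1)) := by
  set v : Fin d → ℤ :=
    fun i : Fin d => if (i : ℕ) = 0 then -(a : ℤ) else if (i : ℕ) = 1 then 1 else 0 with hv
  -- properties of the special vector
  have hvne : v ≠ 0 := by
    intro h
    have h1 : v ⟨1, by omega⟩ = 0 := by rw [h]; rfl
    simp [hv] at h1
  have hvsum : ∑ i : Fin d, v i * (a : ℤ) ^ (i : ℕ) = 0 := by
    have := Fin.sum_univ_eq_sum_range
      (fun n => (if n = 0 then -(a:ℤ) else if n = 1 then 1 else 0) * (a:ℤ)^n) d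
    rw [show (∑ i : Fin d, v i * (a : ℤ) ^ (i : ℕ)) =
        ∑ i : Fin d, (fun n => (if n = 0 then -(a:ℤ) else if n = 1 then 1 else 0) * (a:ℤ)^n)
          (i : ℕ) from rfl, this,
      sum_special a d hd _ (fun n hn0 hn1 => by simp [hn0, hn1])]
    norm_num
  have hvsq : ∑ i : Fin d, (v i)^2 = (a:ℤ)^2 + 1 := by
    have := Fin.sum_univ_eq_sum_range
      (fun n => ((if n = 0 then -(a:ℤ) else if n = 1 then 1 else 0))^2) d
    rw [show (∑ i : Fin d, (v i)^2) =
        ∑ i : Fin d, (fun n => ((if n = 0 then -(a:ℤ) else if n = 1 then 1 else 0))^2)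
          (i : ℕ) from rfl, this,
      sum_special a d hd _ (fun n hn0 hn1 => by simp [hn0, hn1])]
    norm_num
  have hvsqR : ∑ i : Fin d, (v i : ℝ)^2 = (a:ℝ)^2 + 1 := by
    have h1 : ∑ i : Fin d, (v i : ℝ)^2 = ((∑ i : Fin d, (v i)^2 : ℤ) : ℝ) := by push_cast; rfl
    rw [h1, hvsq]
    push_cast
    ring
  refine ⟨⟨⟨v, hvne, by rw [hvsum]; exact dvd_zero _, by rw [hvsqR]⟩, ?_⟩,
    fun w hw => by rw [hw]; exact ⟨hvne, by rw [hvsum]; exact dvd_zero _, by rw [hvsqR]⟩⟩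
  -- lower bound
  rintro r ⟨x, hx0, hdvd, hreq⟩
  set y : ℕ → ℤ := fun n => if h : n < d then x ⟨n, h⟩ else 0 with hy
  have hyx : ∀ i : Fin d, y (i : ℕ) = x i := fun i => by
    simp [hy, i.isLt]
  have hs : ∑ i : Fin d, x i * (a:ℤ)^(i:ℕ) = ∑ n ∈ range d, y n * (a:ℤ)^n := by
    rw [← Fin.sum_univ_eq_sum_range (fun n => y n * (a:ℤ)^n) d]
    exact Finset.sum_congr rfl fun i _ => by rw [hyx i]
  have hq : ∑ i : Fin d, (x i)^2 = ∑ n ∈ range d, (y n)^2 := by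
    rw [← Fin.sum_univ_eq_sum_range (fun n => (y n)^2) d]
    exact Finset.sum_congr rfl fun i _ => by rw [hyx i]
  have hkey : (a:ℤ)^2 + 1 ≤ ∑ n ∈ range d, (y n)^2 := by
    by_contra hlt
    push_neg at hlt
    have hQ : ∑ n ∈ range d, (y n)^2 ≤ (a:ℤ)^2 := by omega
    -- |S| ≤ a^d
    have habs : |∑ n ∈ range d, y n * (a:ℤ)^n| ≤ (a:ℤ)^d := by
      calc |∑ n ∈ range d, y n * (a:ℤ)^n| ≤ ∑ n ∈ range d, |y n * (a:ℤ)^n| :=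
            Finset.abs_sum_le_sum_abs _ _
        _ = ∑ n ∈ range d, |y n| * (a:ℤ)^n := by
            refine Finset.sum_congr rfl fun n _ => ?_
            rw [abs_mul, abs_pow, abs_of_nonneg (by positivity : (0:ℤ) ≤ (a:ℤ))]
        _ ≤ (a:ℤ)^d := lemA a ha d (fun n => |y n|) (fun n => abs_nonneg _)
            (by simpa [sq_abs] using hQ)
    have hdvd' : (m:ℤ) ∣ ∑ n ∈ range d, y n * (a:ℤ)^n := hs ▸ hdvd
    have hS0 : ∑ n ∈ range d, y n * (a:ℤ)^n = 0 := by
      by_contra hne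
      have h1 : (m:ℤ) ≤ |∑ n ∈ range d, y n * (a:ℤ)^n| :=
        Int.le_of_dvd (abs_pos.mpr hne) ((dvd_abs _ _).mpr hdvd')
      have h2 : (a:ℤ)^d < (m:ℤ) := by exact_mod_cast had
      linarith
    have hex : ∃ n, n < d ∧ y n ≠ 0 := by
      obtain ⟨i, hi⟩ := Function.ne_iff.mp hx0
      exact ⟨(i : ℕ), i.isLt, by rw [hyx i]; simpa using hi⟩
    have := lemB a d y hS0 hex
    omega
  -- conclude in ℝ
  have hR : (a:ℝ)^2 + 1 ≤ ∑ i : Fin d, (x i : ℝ)^2 := by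
    have h1 : ∑ i : Fin d, (x i : ℝ)^2 = ((∑ i : Fin d, (x i)^2 : ℤ) : ℝ) := by push_cast; rfl
    have h2 : ((a:ℤ)^2 + 1 : ℤ) ≤ (∑ i : Fin d, (x i)^2 : ℤ) := hq ▸ hkey
    rw [h1]
    exact_mod_cast h2
  rw [hreq]
  exact Real.sqrt_le_sqrt hR
end

section
/- Let a ≥ 2, d ≥ 2 be integers and m = a^d. Then the vector (0, ..., 0, a) belongs to the lattice Λ*_d = { x ∈ ℤ^d : Σ_{i=0}^{d-1} x_i a^i ≡ 0 (mod a^d) }, and every nonzero vector of Λ*_d has length at least a, so the shortest nonzero vector of Λ*_d has length exactly a, attained by (0, ..., 0, a). -/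
open Finset

private lemma digits_zero (a : ℕ) (ha : 2 ≤ a) :
    ∀ (n : ℕ) (x : ℕ → ℤ), (∀ i, |x i| < a) →
      (∑ i ∈ range n, x i * (a : ℤ) ^ i) = 0 → ∀ i < n, x i = 0 := by
  intro n
  induction n with
  | zero => intro x _ _ i hi; omega
  | succ n ih =>
    intro x hb hs i hi
    rw [Finset.sum_range_succ'] at hs
    have hs' : (∑ i ∈ range n, (x (i + 1) * (a : ℤ) ^ i)) * a + x 0 = 0 := by
      rw [Finset.sum_mul]
      simpa [pow_succ, mul_assoc] using hs
    have h0 : x 0 = 0 := by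
      have hdvd : (a : ℤ) ∣ x 0 := ⟨-(∑ i ∈ range n, (x (i + 1) * (a : ℤ) ^ i)), by linarith⟩
      exact Int.eq_zero_of_abs_lt_dvd hdvd (hb 0)
    have hT : (∑ i ∈ range n, (x (i + 1) * (a : ℤ) ^ i)) = 0 := by
      have ha0 : (a : ℤ) ≠ 0 := by positivity
      have := hs'
      rw [h0, add_zero, mul_eq_zero] at this
      tauto
    rcases i with _ | j
    · exact h0
    · exact ih (fun i => x (i + 1)) (fun i => hb (i + 1)) hT j (by omega)

/-- Boundary case `m = a^d` of Proposition 1: the vector `(0, …, 0, a)` lies in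
the dual lattice `Λ*_d = {x ∈ ℤ^d : Σ x_i a^i ≡ 0 (mod a^d)}`, and the shortest
nonzero vector of `Λ*_d` has length exactly `a`. -/
theorem dual_lattice_shortest_vector_boundary
    (a d : ℕ) (ha : 2 ≤ a) (hd : 2 ≤ d) :
    (∀ v : Fin d → ℤ,
      (v = fun i : Fin d => if (i : ℕ) = d - 1 then (a : ℤ) else 0) →
      v ≠ 0 ∧ ((a : ℤ) ^ d ∣ ∑ i : Fin d, v i * (a : ℤ) ^ (i : ℕ))) ∧
    (∀ x : Fin d → ℤ, x ≠ 0 →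
      ((a : ℤ) ^ d ∣ ∑ i : Fin d, x i * (a : ℤ) ^ (i : ℕ)) →
      min (Real.sqrt ((a : ℝ) ^ 2 + 1)) (a : ℝ) ≤ Real.sqrt (∑ i : Fin d, (x i : ℝ) ^ 2)) ∧
    min (Real.sqrt ((a : ℝ) ^ 2 + 1)) (a : ℝ) = (a : ℝ) ∧
    IsLeast
      {r : ℝ | ∃ x : Fin d → ℤ, x ≠ 0 ∧
        ((a : ℤ) ^ d ∣ ∑ i : Fin d, x i * (a : ℤ) ^ (i : ℕ)) ∧
        r = Real.sqrt (∑ i : Fin d, (x i : ℝ) ^ 2)}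
      (a : ℝ) := by
  have ha0 : (0:ℝ) < a := by positivity
  have hlast : d - 1 < d := by omega
  -- the distinguished vector
  set v : Fin d → ℤ := fun i : Fin d => if (i : ℕ) = d - 1 then (a : ℤ) else 0 with hv
  have hv_ne : v ≠ 0 := by
    intro h
    have := congrFun h ⟨d - 1, hlast⟩
    simp [hv] at this
    omega
  have hv_sum : (∑ i : Fin d, v i * (a : ℤ) ^ (i : ℕ)) = (a : ℤ) ^ d := by
    rw [hv]
    rw [Finset.sum_eq_single (⟨d - 1, hlast⟩ : Fin d)]
    · simp
      rw [← pow_succ']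
      congr 1
      omega
    · intro b _ hb
      have : (b : ℕ) ≠ d - 1 := by
        intro h; apply hb; exact Fin.ext h
      simp [this]
    · simp
  -- min fact
  have hmin : min (Real.sqrt ((a : ℝ) ^ 2 + 1)) (a : ℝ) = (a : ℝ) := by
    apply min_eq_right
    rw [Real.le_sqrt ha0.le]
    · linarith
    · positivity
  -- lower bound
  have hlow : ∀ x : Fin d → ℤ, x ≠ 0 →
      ((a : ℤ) ^ d ∣ ∑ i : Fin d, x i * (a : ℤ) ^ (i : ℕ)) →
      (a : ℝ) ≤ Real.sqrt (∑ i : Fin d, (x i : ℝ) ^ 2) := by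
    intro x hx hdvd
    by_cases hbig : ∃ i : Fin d, (a : ℤ) ≤ |x i|
    · obtain ⟨i, hi⟩ := hbig
      rw [Real.le_sqrt ha0.le]
      · have h1 : (a : ℝ) ^ 2 ≤ (x i : ℝ) ^ 2 := by
          have : (a:ℝ) ≤ |(x i : ℝ)| := by
            rw [← Int.cast_abs]; exact_mod_cast hi
          calc (a:ℝ)^2 ≤ |(x i:ℝ)|^2 := by
                apply pow_le_pow_left₀ ha0.le this
            _ = (x i:ℝ)^2 := sq_abs _
        calc (a : ℝ) ^ 2 ≤ (x i : ℝ) ^ 2 := h1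
          _ ≤ ∑ j : Fin d, (x j : ℝ) ^ 2 := by
              apply Finset.single_le_sum (f := fun j => (x j : ℝ)^2)
              · intro j _; positivity
              · exact Finset.mem_univ i
      · positivity
    · push_neg at hbig
      exfalso
      -- all coordinates small: sum is 0, then x = 0
      set y : ℕ → ℤ := fun i => if h : i < d then x ⟨i, h⟩ else 0 with hy
      have hsum_eq : (∑ i : Fin d, x i * (a : ℤ) ^ (i : ℕ)) =
          ∑ i ∈ range d, y i * (a : ℤ) ^ i := by
        rw [Finset.sum_range fun i => y i * (a:ℤ)^i]
        apply Finset.sum_congr rfl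
        intro i _
        simp [hy, i.isLt]
      have hbound : |∑ i ∈ range d, y i * (a : ℤ) ^ i| < (a : ℤ) ^ d := by
        calc |∑ i ∈ range d, y i * (a : ℤ) ^ i|
            ≤ ∑ i ∈ range d, |y i * (a : ℤ) ^ i| := Finset.abs_sum_le_sum_abs _ _
          _ ≤ ∑ i ∈ range d, ((a : ℤ) - 1) * (a : ℤ) ^ i := by
              apply Finset.sum_le_sum
              intro i hi
              rw [abs_mul, abs_pow, abs_of_nonneg (by positivity : (0:ℤ) ≤ (a:ℤ))]
              apply mul_le_mul_of_nonneg_right _ (by positivity)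
              rw [hy]
              rcases lt_or_ge i d with h | h
              · simp only [dif_pos h]
                have := hbig ⟨i, h⟩
                omega
              · simp [not_lt.2 h]; omega
          _ = ((a : ℤ) ^ d - 1) := by
              rw [← Finset.mul_sum, mul_comm]
              exact geom_sum_mul (a : ℤ) d
          _ < (a : ℤ) ^ d := by omega
      have hS0 : (∑ i ∈ range d, y i * (a : ℤ) ^ i) = 0 := by
        apply Int.eq_zero_of_abs_lt_dvd _ hbound
        rw [← hsum_eq]; exact hdvd
      have hy_small : ∀ i, |y i| < (a : ℤ) := by
        intro i
        rw [hy]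
        rcases lt_or_ge i d with h | h
        · simp only [dif_pos h]; exact hbig ⟨i, h⟩
        · simp [not_lt.2 h]; omega
      have := digits_zero a ha d y hy_small hS0
      apply hx
      funext i
      have := this i i.isLt
      rw [hy] at this
      simpa [i.isLt] using this
  refine ⟨?_, ?_, hmin, ?_, ?_⟩
  · rintro w rfl
    exact ⟨hv_ne, hv_sum ▸ dvd_refl _⟩
  · intro x hx hdvd
    rw [hmin]
    exact hlow x hx hdvd
  · -- membership
    refine ⟨v, hv_ne, hv_sum ▸ dvd_refl _, ?_⟩
    have : (∑ i : Fin d, (v i : ℝ) ^ 2) = (a : ℝ) ^ 2 := by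
      rw [hv]
      rw [Finset.sum_eq_single (⟨d - 1, hlast⟩ : Fin d)]
      · simp
      · intro b _ hb
        have : (b : ℕ) ≠ d - 1 := fun h => hb (Fin.ext h)
        simp [this]
      · simp
    rw [this, Real.sqrt_sq ha0.le]
  · rintro r ⟨x, hx, hdvd, rfl⟩
    exact hlow x hx hdvd
end
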